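/- For 0 < q < 1, the inequality q²(4 - q)/(1 + q + q³) > q holds if and only if q > √2 - 1. -/

import Mathlib

/-!
Clearing the positive denominator, `Γ - q` has the sign of
`q²(4 - q) - q(1 + q + q³) = q (1 - q) (q² + 2q - 1)`. For `0 < q < 1` the first two factors are
positive, so `Γ > q` exactly when `(q + 1)² > 2`, i.e. when `q > √2 - 1`.
-/

lemma one_plus_two_gain_sub_honest (q : ℝ) :
    q ^ 2 * (4 - q) - q * (1 + q + q ^ 3) = q * (1 - q) * (q ^ 2 + 2 * q - 1) := by
  ring

lemma sqrt_two_sub_one_lt_iff {q : ℝ} (hq : -1 < q) :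
    Real.sqrt 2 - 1 < q ↔ 0 < q ^ 2 + 2 * q - 1 := by
  rw [sub_lt_iff_lt_add, Real.sqrt_lt' (by linarith)]
  constructor <;> intro h <;> linarith

/-- The "1+2" strategy beats honest mining iff q > √2 - 1. -/
theorem one_plus_two_threshold (q : ℝ) (hq0 : 0 < q) (hq1 : q < 1) :
    q ^ 2 * (4 - q) / (1 + q + q ^ 3) > q ↔ q > Real.sqrt 2 - 1 := by
  have hden : 0 < 1 + q + q ^ 3 := by positivity
  have hfactor : 0 < q * (1 - q) := mul_pos hq0 (sub_pos.mpr hq1)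
  rw [gt_iff_lt, gt_iff_lt, lt_div_iff₀ hden, ← sub_pos, one_plus_two_gain_sub_honest,
    mul_pos_iff_of_pos_left hfactor, sqrt_two_sub_one_lt_iff (by linarith)]
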